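/- In Z/4Z, for every n ≡ 1 (mod 3) and every n-tuple (a_1,...,a_n) with all a_i ∈ {1, -1} (mod 4), there exist x, y ∈ {1, -1} such that M_{n+2}(x, a_1, ..., a_n, y) = ±Id over Z/4Z. In particular, the continuant K_n(a_1,...,a_n) of any such tuple equals ±1 in Z/4Z. -/

import Mathlib

open Matrix

/-- `Mlist [a₁,…,aₙ] = M(aₙ)⋯M(a₁)` where `M(a) = [[a,-1],[1,0]]`. -/
def Mlist {A : Type*} [CommRing A] (l : List A) : Matrix (Fin 2) (Fin 2) A :=
  ((l.map (fun a => !![a, -1; 1, 0])).reverse).prod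

/-- The continuant `K` (tridiagonal determinant), with `K [] = 1`. -/
def cont {A : Type*} [CommRing A] : List A → A
  | [] => 1
  | [a] => a
  | a :: b :: l => a * cont (b :: l) - cont l

/-- `(a₁,…,aₙ) ⊕ (b₁,…,bₘ) = (a₁+bₘ, a₂,…,aₙ₋₁, aₙ+b₁, b₂,…,bₘ₋₁)` (for lists of length ≥ 2). -/
def oplus {A : Type*} [CommRing A] (la lb : List A) : List A :=
  match la, lb with
  | a1 :: ta, b1 :: tb =>
      (a1 + tb.getLastD b1) :: (ta.dropLast ++ ((ta.getLastD a1 + b1) :: tb.dropLast))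
  | _, _ => []

/-!
Reduction mod 2 sends both `M(1)` and `M(-1)` to `T = [[1,1],[1,0]]`, which has order 3 in
`SL₂(𝔽₂)`; so for `n ≡ 1 (mod 3)` the product `m = M_n(a)` is a determinant-one matrix over `ℤ/4`
reducing to `T`. These form a coset of the level-2 congruence subgroup, of size 8, and a finite
check shows it consists exactly of the eight matrices `±M(y)⁻¹M(x)⁻¹`, `x, y = ±1`. Finally the
continuant is the `(0,0)` entry of `m`, and the `(1,1)` entry of `M(y) m M(x)` is `-m₀₀`, so
`M(y) m M(x) = ±1` forces `K_n(a) = ∓1`.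
-/

section Continuant

variable {A : Type*} [CommRing A]

theorem Mlist_cons (a : A) (l : List A) : Mlist (a :: l) = Mlist l * !![a, -1; 1, 0] := by
  simp [Mlist]

theorem Mlist_append_singleton (l : List A) (y : A) :
    Mlist (l ++ [y]) = !![y, -1; 1, 0] * Mlist l := by
  simp [Mlist]

theorem Mlist_replicate (n : ℕ) (a : A) : Mlist (List.replicate n a) = !![a, -1; 1, 0] ^ n := by
  simp [Mlist, List.prod_replicate]

theorem Mlist_map {B : Type*} [CommRing B] (f : A →+* B) (l : List A) :
    Mlist (l.map f) = f.mapMatrix (Mlist l) := by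
  induction l with
  | nil => simp [Mlist]
  | cons a l ih =>
    rw [List.map_cons, Mlist_cons, Mlist_cons, ih, map_mul]
    congr 1
    ext i j
    fin_cases i <;> fin_cases j <;> simp

theorem det_Mlist (l : List A) : (Mlist l).det = 1 := by
  induction l with
  | nil => simp [Mlist]
  | cons a l ih => simp [Mlist_cons, ih]

theorem Mlist_zero_zero : ∀ l : List A, Mlist l 0 0 = cont l
  | [] => rfl
  | [a] => by simp [Mlist, cont]
  | a :: b :: l => by
    have hcons (c : A) (t : List A) : Mlist (c :: t) 0 0 = Mlist t 0 0 * c + Mlist t 0 1 ∧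
        Mlist (c :: t) 0 1 = -Mlist t 0 0 := by
      simp [Mlist_cons, mul_apply, Fin.sum_univ_two]
    rw [(hcons a _).1, (hcons b l).2, Mlist_zero_zero (b :: l), Mlist_zero_zero l, cont]
    ring

theorem Mlist_cons_append_singleton_one_one (x y : A) (l : List A) :
    Mlist (x :: (l ++ [y])) 1 1 = -cont l := by
  rw [Mlist_cons, Mlist_append_singleton, ← Mlist_zero_zero]
  simp [mul_apply, vecMul, dotProduct, Fin.sum_univ_two]

end Continuant

set_option synthInstance.maxSize 256 in
theorem exists_sandwich_eq_one_or_neg_one (m : Matrix (Fin 2) (Fin 2) (ZMod 4)) (hdet : m.det = 1)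
    (hm : (ZMod.castHom (by norm_num : 2 ∣ 4) (ZMod 2)).mapMatrix m = !![1, 1; 1, 0]) :
    ∃ x y : ZMod 4, (x = 1 ∨ x = -1) ∧ (y = 1 ∨ y = -1) ∧
      (!![y, -1; 1, 0] * m * !![x, -1; 1, 0] = 1 ∨ !![y, -1; 1, 0] * m * !![x, -1; 1, 0] = -1) := by
  rw [m.eta_fin_two] at hdet hm ⊢
  rw [det_fin_two_of] at hdet
  simp only [RingHom.mapMatrix_apply, ← Matrix.ext_iff, Fin.forall_fin_two, map_apply, of_apply,
    cons_val', cons_val_zero, cons_val_one, empty_val', cons_val_fin_one] at hm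
  obtain ⟨⟨h00, h01⟩, h10, h11⟩ := hm
  generalize m 0 0 = a, m 0 1 = b, m 1 0 = c, m 1 1 = d at *
  revert a b c d
  decide

theorem Mlist_mod_two (l : List (ZMod 4)) (h : ∀ a ∈ l, a = 1 ∨ a = -1) :
    (ZMod.castHom (by norm_num : 2 ∣ 4) (ZMod 2)).mapMatrix (Mlist l) = !![1, 1; 1, 0] ^ l.length := by
  have hred : l.map (ZMod.castHom (by norm_num : 2 ∣ 4) (ZMod 2)) = List.replicate l.length 1 :=
    List.map_eq_replicate_iff.2 fun a ha => by rcases h a ha with rfl | rfl <;> decide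
  rw [← Mlist_map, hred, Mlist_replicate, show (-1 : ZMod 2) = 1 by decide]

theorem stmt12 (n : ℕ) (hn : n % 3 = 1) (l : List (ZMod 4)) (hl : l.length = n)
    (h : ∀ a ∈ l, a = 1 ∨ a = -1) :
    (∃ x y : ZMod 4, (x = 1 ∨ x = -1) ∧ (y = 1 ∨ y = -1) ∧
      (Mlist (x :: (l ++ [y])) = 1 ∨ Mlist (x :: (l ++ [y])) = -1)) ∧
    (cont l = 1 ∨ cont l = -1) := by
  have hT : (!![1, 1; 1, 0] : Matrix (Fin 2) (Fin 2) (ZMod 2)) ^ 3 = 1 := by decide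
  have hmod := Mlist_mod_two l h
  rw [pow_eq_pow_mod _ hT, hl, hn, pow_one] at hmod
  obtain ⟨x, y, hx, hy, hxy⟩ := exists_sandwich_eq_one_or_neg_one _ (det_Mlist l) hmod
  have hsandwich : Mlist (x :: (l ++ [y])) = !![y, -1; 1, 0] * Mlist l * !![x, -1; 1, 0] := by
    rw [Mlist_cons, Mlist_append_singleton]
  rw [← hsandwich] at hxy
  refine ⟨⟨x, y, hx, hy, hxy⟩, ?_⟩
  have hcont := Mlist_cons_append_singleton_one_one x y l
  rcases hxy with hxy | hxy
  · rw [hxy, one_apply_eq] at hcont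
    exact Or.inr (neg_eq_iff_eq_neg.mp hcont.symm)
  · rw [hxy, neg_apply, one_apply_eq, neg_inj] at hcont
    exact Or.inl hcont.symm
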